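/- Assume the pre-diffeo-valued field structure is dense, and set I := Q ∩ M. Then the lattice of Q-submodules of K (K viewed as a Q-module) has cube rank exactly 2; explicitly: (i) whenever A, B₁, B₂, B₃ are Q-submodules of K with A ⊆ Bᵢ and A ≠ Bᵢ for i = 1, 2, 3, there exists i ∈ {1,2,3} such that Bᵢ ∩ (Bⱼ + Bₗ) ≠ A, where {j, l} = {1,2,3} \ {i}; and (ii) there exist Q-submodules N₁, N₂ of K with N₁ ∩ N₂ = I, N₁ + N₂ = R, I ≠ N₁ ≠ R and I ≠ N₂ ≠ R. -/

import Mathlib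

def AlgebraicOverPrime (p : ℕ) {K : Type*} [Field K] [CharP K p] (q : K) : Prop :=
  ∃ f : Polynomial (ZMod p), f ≠ 0 ∧ Polynomial.eval₂ (ZMod.castHom dvd_rfl K) q f = 0

structure PreDiffeoValued (p : ℕ) (K : Type*) [Field K]
    (Γ : Type*) [AddCommGroup Γ] [LinearOrder Γ] [IsOrderedAddMonoid Γ]
    (k : Type*) [Field k] (D : Type*) [AddCommGroup D] where
  v : K → WithTop Γ
  v_surj : ∀ γ : Γ, ∃ x : K, v x = (γ : WithTop Γ)
  v_eq_top_iff : ∀ x : K, v x = ⊤ ↔ x = 0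
  v_mul : ∀ x y : K, v (x * y) = v x + v y
  v_add : ∀ x y : K, min (v x) (v y) ≤ v (x + y)
  O : Subring K
  mem_O_iff : ∀ x : K, x ∈ O ↔ 0 ≤ v x
  res : K → k
  res_add : ∀ x ∈ O, ∀ y ∈ O, res (x + y) = res x + res y
  res_mul : ∀ x ∈ O, ∀ y ∈ O, res (x * y) = res x * res y
  res_one : res 1 = 1
  res_surjective : ∀ z : k, ∃ x ∈ O, res x = z
  res_eq_zero_iff : ∀ x ∈ O, (res x = 0 ↔ 0 < v x)
  smul : K → D → D
  smul_add : ∀ a ∈ O, ∀ x y : D, smul a (x + y) = smul a x + smul a y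
  add_smul : ∀ a ∈ O, ∀ b ∈ O, ∀ x : D, smul (a + b) x = smul a x + smul b x
  mul_smul : ∀ a ∈ O, ∀ b ∈ O, ∀ x : D, smul (a * b) x = smul a (smul b x)
  one_smul : ∀ x : D, smul 1 x = x
  divisible : ∀ a ∈ O, a ≠ 0 → ∀ y : D, ∃ x : D, smul a x = y
  total : ∀ x y : D, (∃ a ∈ O, x = smul a y) ∨ (∃ a ∈ O, y = smul a x)
  phi : k → D
  phi_add : ∀ z w : k, phi (z + w) = phi z + phi w
  phi_injective : Function.Injective phi
  phi_smul : ∀ a ∈ O, ∀ z : k, phi (res a * z) = smul a (phi z)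
  R : Subring K
  R_le_O : (R : Set K) ⊆ (O : Set K)
  d : K → k
  d_add : ∀ x ∈ R, ∀ y ∈ R, d (x + y) = d x + d y
  d_leibniz : ∀ x ∈ R, ∀ y ∈ R, d (x * y) = res x * d y + res y * d x
  d_surjective : ∀ z : k, ∃ x ∈ R, d x = z
  pi : K → D
  pi_add : ∀ x ∈ O, ∀ y ∈ O, pi (x + y) = pi x + pi y
  pi_qsmul : ∀ q ∈ R, d q = 0 → ∀ x ∈ O, pi (q * x) = smul q (pi x)
  pi_surjective : ∀ y : D, ∃ x ∈ O, pi x = y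
  pi_eq_zero_iff : ∀ x ∈ O, (pi x = 0 ↔ x ∈ R ∧ d x = 0)
  pi_eq_phi_d : ∀ x ∈ R, pi x = phi (d x)
  char_two_sq : p = 2 → ∀ a ∈ O, a ^ 2 ∈ R ∧ d (a ^ 2) = 0
  char_odd_pi : p ≠ 2 → ∀ a ∈ O, ∀ b ∈ O, pi (a * b) = smul a (pi b) + smul b (pi a)

/-- A pre-diffeo-valued field structure together with the secondary valuation
`val : D → Γ ∪ {∞}`. -/
structure PreDiffeoValuedS (p : ℕ) (K : Type*) [Field K]
    (Γ : Type*) [AddCommGroup Γ] [LinearOrder Γ] [IsOrderedAddMonoid Γ]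
    (k : Type*) [Field k] (D : Type*) [AddCommGroup D]
    extends PreDiffeoValued p K Γ k D where
  val : D → WithTop Γ
  val_nonpos_or_top : ∀ x : D, val x ≤ 0 ∨ val x = ⊤
  val_eq_top_iff : ∀ x : D, val x = ⊤ ↔ x = 0
  val_nonneg_iff : ∀ x : D, 0 ≤ val x ↔ ∃ z : k, phi z = x
  val_smul_of_nonpos : ∀ a ∈ O, ∀ x : D, v a + val x ≤ 0 → val (smul a x) = v a + val x
  val_smul_of_pos : ∀ a ∈ O, ∀ x : D, 0 < v a + val x → val (smul a x) = ⊤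
  val_add : ∀ x y : D, min (val x) (val y) ≤ val (x + y)
  smul_of_val_le : ∀ x y : D, val x ≤ val y → ∃ a ∈ O, y = smul a x
  smul_of_val_lt : ∀ x y : D, val x < val y → ∃ a : K, 0 < v a ∧ y = smul a x
  val_unbounded : ∀ γ : Γ, ∃ x : D, val x ≤ (γ : WithTop Γ)

namespace PreDiffeoValued
variable {p : ℕ} {K : Type*} [Field K] {Γ : Type*} [AddCommGroup Γ] [LinearOrder Γ] [IsOrderedAddMonoid Γ]
  {k : Type*} [Field k] {D : Type*} [AddCommGroup D]

def Q (P : PreDiffeoValued p K Γ k D) : Set K := {x | x ∈ P.R ∧ P.d x = 0}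

def IsDense (P : PreDiffeoValued p K Γ k D) : Prop :=
  ∀ a ∈ P.O, ∀ γ : Γ, ∃ q ∈ P.Q, (γ : WithTop Γ) < P.v (a - q)

end PreDiffeoValued

open Pointwise

/-- `N` is a `Q`-submodule of `K`, where `Q ⊆ K` acts by multiplication. -/
def IsQSubmodule {K : Type*} [Field K] (Q : Set K) (N : Set K) : Prop :=
  (0 : K) ∈ N ∧ (∀ x ∈ N, ∀ y ∈ N, x + y ∈ N) ∧ (∀ x ∈ N, -x ∈ N) ∧
    ∀ q ∈ Q, ∀ x ∈ N, q * x ∈ N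

/-!
Density lets elements of `Q` approximate any `a ∈ O` so closely that `(a - q) • π c = 0`. As
the `O`-multiples in `D` are totally ordered, for `b, c ∈ O` one of `π b, π c` is an
`O`-multiple of the other, which yields `q ∈ Q` with `b - q c ∈ Q` or `c - q b ∈ Q`. Dividing by
an element of least valuation, among any three elements of `K` one is a `Q`-combination of the
other two, and this rules out a strict `3`-cube. The strict `2`-cube is `Q, R ∩ M` between
`Q ∩ M` and `R`: `Q + R ∩ M = R` by density once more, `1` separates `Q ∩ M` from `Q`, and an
element `x ∈ R` with `d x = 1`, corrected by an element of `Q`, separates `R ∩ M` from `Q ∩ M`.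
-/

section

variable {K : Type*} [Field K] {Q : Set K}

def IsQCombination (Q : Set K) (x y z : K) : Prop :=
  ∃ a ∈ Q, ∃ b ∈ Q, x = a * y + b * z

theorem IsQCombination.swap {x y z : K} (h : IsQCombination Q x y z) :
    IsQCombination Q x z y := by
  obtain ⟨a, ha, b, hb, rfl⟩ := h
  exact ⟨b, hb, a, ha, add_comm _ _⟩

theorem IsQCombination.mem_add {x y z : K} {Y Z : Set K} (h : IsQCombination Q x y z)
    (hY : IsQSubmodule Q Y) (hZ : IsQSubmodule Q Z) (hy : y ∈ Y) (hz : z ∈ Z) : x ∈ Y + Z := by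
  obtain ⟨a, ha, b, hb, rfl⟩ := h
  exact Set.add_mem_add (hY.2.2.2 a ha y hy) (hZ.2.2.2 b hb z hz)

theorem inter_add_ne_of_forall_isQCombination
    (hQ : ∀ x₁ x₂ x₃ : K, IsQCombination Q x₁ x₂ x₃ ∨ IsQCombination Q x₂ x₁ x₃ ∨
      IsQCombination Q x₃ x₁ x₂)
    {A B₁ B₂ B₃ : Set K} (hB₁ : IsQSubmodule Q B₁) (hB₂ : IsQSubmodule Q B₂)
    (hB₃ : IsQSubmodule Q B₃) (h₁ : ¬B₁ ⊆ A) (h₂ : ¬B₂ ⊆ A) (h₃ : ¬B₃ ⊆ A) :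
    B₁ ∩ (B₂ + B₃) ≠ A ∨ B₂ ∩ (B₁ + B₃) ≠ A ∨ B₃ ∩ (B₁ + B₂) ≠ A := by
  obtain ⟨x₁, hx₁, hx₁A⟩ := Set.not_subset.1 h₁
  obtain ⟨x₂, hx₂, hx₂A⟩ := Set.not_subset.1 h₂
  obtain ⟨x₃, hx₃, hx₃A⟩ := Set.not_subset.1 h₃
  have ne_of_mem {x : K} {X YZ : Set K} (hx : x ∈ X) (hxA : x ∉ A) (hYZ : x ∈ YZ) :
      X ∩ YZ ≠ A := fun h => hxA (h ▸ ⟨hx, hYZ⟩)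
  rcases hQ x₁ x₂ x₃ with h | h | h
  · exact Or.inl (ne_of_mem hx₁ hx₁A (h.mem_add hB₂ hB₃ hx₂ hx₃))
  · exact Or.inr (Or.inl (ne_of_mem hx₂ hx₂A (h.mem_add hB₁ hB₃ hx₁ hx₃)))
  · exact Or.inr (Or.inr (ne_of_mem hx₃ hx₃A (h.mem_add hB₁ hB₂ hx₁ hx₂)))

theorem AddSubgroup.isQSubmodule (N : AddSubgroup K) (hN : ∀ q ∈ Q, ∀ x ∈ N, q * x ∈ N) :
    IsQSubmodule Q N :=
  ⟨N.zero_mem, fun _ hx _ hy => N.add_mem hx hy, fun _ hx => N.neg_mem hx, hN⟩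

end

namespace PreDiffeoValued

variable {p : ℕ} {K : Type*} [Field K] {Γ : Type*} [AddCommGroup Γ] [LinearOrder Γ]
  [IsOrderedAddMonoid Γ] {k : Type*} [Field k] {D : Type*} [AddCommGroup D]
  (P : PreDiffeoValued p K Γ k D)

def M : Set K := {x | 0 < P.v x}

theorem mem_M {x : K} : x ∈ P.M ↔ 0 < P.v x := Iff.rfl

theorem v_one : P.v 1 = 0 := by
  obtain ⟨x, hx⟩ := P.v_surj 0
  have h := P.v_mul 1 x
  rwa [one_mul, hx, WithTop.coe_zero, add_zero, eq_comm] at h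

def addValuation : AddValuation K (WithTop Γ) :=
  AddValuation.of P.v ((P.v_eq_top_iff 0).2 rfl) P.v_one P.v_add P.v_mul

theorem v_neg (x : K) : P.v (-x) = P.v x := P.addValuation.map_neg x

theorem v_div (x y : K) : P.v (x / y) = P.v x - P.v y := P.addValuation.map_div

theorem div_mem_O_of_v_le {x y : K} (hy : y ≠ 0) (h : P.v y ≤ P.v x) : x / y ∈ P.O := by
  have hy' : P.v y ≠ ⊤ := fun h => hy ((P.v_eq_top_iff y).1 h)
  rwa [P.mem_O_iff, P.v_div, ← LinearOrderedAddCommGroupWithTop.sub_self_eq_zero_of_ne_top hy',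
    LinearOrderedAddCommGroupWithTop.sub_le_sub_iff_left_of_ne_top hy']

def dHom : P.R →+ k := AddMonoidHom.mk' (fun x => P.d x) fun x y => P.d_add x x.2 y y.2

theorem d_sub {x y : K} (hx : x ∈ P.R) (hy : y ∈ P.R) : P.d (x - y) = P.d x - P.d y :=
  P.dHom.map_sub ⟨x, hx⟩ ⟨y, hy⟩

theorem d_one : P.d 1 = 0 := by
  have h := P.d_leibniz 1 (one_mem P.R) 1 (one_mem P.R)
  rwa [one_mul, P.res_one, one_mul, left_eq_add] at h

def QSubring : Subring K where
  carrier := P.Q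
  zero_mem' := ⟨zero_mem P.R, P.dHom.map_zero⟩
  one_mem' := ⟨one_mem P.R, P.d_one⟩
  add_mem' hx hy := ⟨add_mem hx.1 hy.1, by rw [P.d_add _ hx.1 _ hy.1, hx.2, hy.2, add_zero]⟩
  neg_mem' hx := ⟨neg_mem hx.1, (P.dHom.map_neg ⟨_, hx.1⟩).trans (neg_eq_zero.2 hx.2)⟩
  mul_mem' hx hy := ⟨mul_mem hx.1 hy.1, by simp [P.d_leibniz _ hx.1 _ hy.1, hx.2, hy.2]⟩

theorem Q_subset_R : P.Q ⊆ P.R := fun _ hx => hx.1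

theorem Q_subset_O : P.Q ⊆ P.O := fun _ hx => P.R_le_O hx.1

theorem pi_sub {x y : K} (hx : x ∈ P.O) (hy : y ∈ P.O) : P.pi (x - y) = P.pi x - P.pi y :=
  (AddMonoidHom.mk' (fun z : P.O => P.pi z) fun z w => P.pi_add z z.2 w w.2).map_sub
    ⟨x, hx⟩ ⟨y, hy⟩

theorem sub_smul {a b : K} (ha : a ∈ P.O) (hb : b ∈ P.O) (y : D) :
    P.smul (a - b) y = P.smul a y - P.smul b y :=
  (AddMonoidHom.mk' (fun c : P.O => P.smul c y) fun c c' => P.add_smul c c.2 c' c'.2 y).map_sub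
    ⟨a, ha⟩ ⟨b, hb⟩

theorem isQSubmodule_Q : IsQSubmodule P.Q P.Q :=
  P.QSubring.toAddSubgroup.isQSubmodule fun _ hq _ hx => P.QSubring.mul_mem hq hx

theorem isQSubmodule_R_inter_M : IsQSubmodule P.Q ((P.R : Set K) ∩ P.M) := by
  refine ⟨⟨zero_mem P.R, ?_⟩, fun x hx y hy => ⟨add_mem hx.1 hy.1, ?_⟩,
    fun x hx => ⟨neg_mem hx.1, ?_⟩, fun q hq x hx => ⟨mul_mem hq.1 hx.1, ?_⟩⟩
  · simp [mem_M, (P.v_eq_top_iff 0).2 rfl]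
  · exact lt_min hx.2 hy.2 |>.trans_le (P.v_add x y)
  · rw [mem_M, P.v_neg]
    exact hx.2
  · rw [mem_M, P.v_mul]
    exact hx.2.trans_le (le_add_of_nonneg_left ((P.mem_O_iff q).1 (P.Q_subset_O hq)))

theorem ne_inter_M_of_one_mem {S : Set K} (hS : (1 : K) ∈ S) : S ≠ S ∩ P.M := fun h => by
  have h1 : (1 : K) ∈ P.M := (h ▸ hS : (1 : K) ∈ S ∩ P.M).2
  exact (P.mem_M.1 h1).ne' P.v_one

variable {P}

theorem IsDense.exists_v_sub_pos (hP : P.IsDense) {x : K} (hx : x ∈ P.O) :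
    ∃ q ∈ P.Q, 0 < P.v (x - q) := by
  simpa using hP x hx 0

theorem IsDense.Q_add_R_inter_M (hP : P.IsDense) : P.Q + (P.R : Set K) ∩ P.M = P.R := by
  ext x
  constructor
  · rintro ⟨q, hq, y, hy, rfl⟩
    exact add_mem hq.1 hy.1
  · intro hx
    obtain ⟨q, hq, hv⟩ := hP.exists_v_sub_pos (P.R_le_O hx)
    exact ⟨q, hq, x - q, ⟨sub_mem hx hq.1, hv⟩, add_sub_cancel _ _⟩

theorem IsDense.R_inter_M_ne_Q_inter_M (hP : P.IsDense) :
    (P.R : Set K) ∩ P.M ≠ P.Q ∩ P.M := fun h => by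
  obtain ⟨x, hx, hdx⟩ := P.d_surjective 1
  obtain ⟨q, hq, hv⟩ := hP.exists_v_sub_pos (P.R_le_O hx)
  have hd : P.d (x - q) = 0 := (h ▸ ⟨sub_mem hx hq.1, hv⟩ : x - q ∈ P.Q ∩ P.M).1.2
  rw [P.d_sub hx hq.1, hdx, hq.2, sub_zero] at hd
  exact one_ne_zero hd

end PreDiffeoValued

namespace PreDiffeoValuedS

variable {p : ℕ} {K : Type*} [Field K] {Γ : Type*} [AddCommGroup Γ] [LinearOrder Γ]
  [IsOrderedAddMonoid Γ] {k : Type*} [Field k] {D : Type*} [AddCommGroup D]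
  (P : PreDiffeoValuedS p K Γ k D)

theorem exists_forall_smul_eq_zero (y : D) :
    ∃ γ : Γ, ∀ a : K, (γ : WithTop Γ) < P.v a → a ∈ P.O ∧ P.smul a y = 0 := by
  have hval : ∃ γ : Γ, 0 ≤ γ ∧ ∀ w : WithTop Γ, (γ : WithTop Γ) < w → 0 < w + P.val y := by
    cases hy : P.val y with
    | top => exact ⟨0, le_rfl, fun w _ => by simp⟩
    | coe g =>
      have hg : g ≤ 0 := by
        simpa [hy] using P.val_nonpos_or_top y
      refine ⟨-g, neg_nonneg.2 hg, fun w hw => ?_⟩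
      induction w using WithTop.recTopCoe with
      | top => simp
      | coe m => exact_mod_cast neg_lt_iff_pos_add.1 (WithTop.coe_lt_coe.1 hw)
  obtain ⟨γ, hγ, hpos⟩ := hval
  refine ⟨γ, fun a ha => ?_⟩
  have haO : a ∈ P.O := (P.mem_O_iff a).2 ((WithTop.coe_nonneg.2 hγ).trans ha.le)
  exact ⟨haO, (P.val_eq_top_iff _).1 (P.val_smul_of_pos a haO y (hpos _ ha))⟩

variable {P}

theorem exists_sub_mul_mem_Q_of_pi_eq_smul (hP : P.IsDense) {a b c : K} (hb : b ∈ P.O)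
    (hc : c ∈ P.O) (ha : a ∈ P.O) (h : P.pi b = P.smul a (P.pi c)) :
    ∃ q ∈ P.Q, b - q * c ∈ P.Q := by
  obtain ⟨γ, hγ⟩ := P.exists_forall_smul_eq_zero (P.pi c)
  obtain ⟨q, hq, hv⟩ := hP a ha γ
  obtain ⟨-, hkill⟩ := hγ (a - q) hv
  have hqO : q ∈ P.O := P.Q_subset_O hq
  refine ⟨q, hq, (P.pi_eq_zero_iff _ (sub_mem hb (mul_mem hqO hc))).1 ?_⟩
  rw [P.pi_sub hb (mul_mem hqO hc), P.pi_qsmul q hq.1 hq.2 c hc, h, ← P.sub_smul ha hqO, hkill]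

theorem exists_sub_mul_mem_Q (hP : P.IsDense) {b c : K} (hb : b ∈ P.O) (hc : c ∈ P.O) :
    ∃ q ∈ P.Q, b - q * c ∈ P.Q ∨ c - q * b ∈ P.Q := by
  rcases P.total (P.pi b) (P.pi c) with ⟨a, ha, h⟩ | ⟨a, ha, h⟩
  · obtain ⟨q, hq, h'⟩ := exists_sub_mul_mem_Q_of_pi_eq_smul hP hb hc ha h
    exact ⟨q, hq, Or.inl h'⟩
  · obtain ⟨q, hq, h'⟩ := exists_sub_mul_mem_Q_of_pi_eq_smul hP hc hb ha h
    exact ⟨q, hq, Or.inr h'⟩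

theorem isQCombination_of_v_le (hP : P.IsDense) {x₁ x₂ x₃ : K} (h₂ : P.v x₁ ≤ P.v x₂)
    (h₃ : P.v x₁ ≤ P.v x₃) :
    IsQCombination P.Q x₂ x₁ x₃ ∨ IsQCombination P.Q x₃ x₁ x₂ := by
  by_cases hx₁ : x₁ = 0
  · have hx₂ : x₂ = 0 := (P.v_eq_top_iff x₂).1 (top_le_iff.1 ((P.v_eq_top_iff x₁).2 hx₁ ▸ h₂))
    exact Or.inl ⟨0, P.QSubring.zero_mem, 0, P.QSubring.zero_mem, by simp [hx₂]⟩
  obtain ⟨q, hq, h | h⟩ :=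
    exists_sub_mul_mem_Q hP (P.div_mem_O_of_v_le hx₁ h₂) (P.div_mem_O_of_v_le hx₁ h₃)
  · exact Or.inl ⟨_, h, q, hq, by field_simp; ring⟩
  · exact Or.inr ⟨_, h, q, hq, by field_simp; ring⟩

theorem isQCombination_trichotomy (hP : P.IsDense) (x₁ x₂ x₃ : K) :
    IsQCombination P.Q x₁ x₂ x₃ ∨ IsQCombination P.Q x₂ x₁ x₃ ∨ IsQCombination P.Q x₃ x₁ x₂ := by
  have of_x₃_le (h₁ : P.v x₃ ≤ P.v x₁) (h₂ : P.v x₃ ≤ P.v x₂) :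
      IsQCombination P.Q x₁ x₂ x₃ ∨ IsQCombination P.Q x₂ x₁ x₃ ∨
        IsQCombination P.Q x₃ x₁ x₂ := by
    rcases isQCombination_of_v_le hP h₁ h₂ with h | h
    · exact Or.inl h.swap
    · exact Or.inr (Or.inl h.swap)
  rcases le_total (P.v x₁) (P.v x₂) with h₁₂ | h₂₁
  · rcases le_total (P.v x₁) (P.v x₃) with h₁₃ | h₃₁
    · exact Or.inr (isQCombination_of_v_le hP h₁₂ h₁₃)
    · exact of_x₃_le h₃₁ (h₃₁.trans h₁₂)
  · rcases le_total (P.v x₂) (P.v x₃) with h₂₃ | h₃₂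
    · rcases isQCombination_of_v_le hP h₂₁ h₂₃ with h | h
      · exact Or.inl h
      · exact Or.inr (Or.inr h.swap)
    · exact of_x₃_le (h₃₂.trans h₂₁) h₃₂

end PreDiffeoValuedS

theorem cubeRank_Q_submodules_eq_two_general
    {p : ℕ} {K : Type*} [Field K]
    {Γ : Type*} [AddCommGroup Γ] [LinearOrder Γ] [IsOrderedAddMonoid Γ]
    {k : Type*} [Field k] {D : Type*} [AddCommGroup D]
    (P : PreDiffeoValuedS p K Γ k D)
    (hdense : P.toPreDiffeoValued.IsDense) :
    -- (i) no strict 3-cube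
    (∀ A B₁ B₂ B₃ : Set K,
      IsQSubmodule P.Q A → IsQSubmodule P.Q B₁ → IsQSubmodule P.Q B₂ →
        IsQSubmodule P.Q B₃ →
      A ⊆ B₁ → A ≠ B₁ → A ⊆ B₂ → A ≠ B₂ → A ⊆ B₃ → A ≠ B₃ →
      (B₁ ∩ (B₂ + B₃) ≠ A ∨ B₂ ∩ (B₁ + B₃) ≠ A ∨ B₃ ∩ (B₁ + B₂) ≠ A)) ∧
    -- (ii) a strict 2-cube between `I = Q ∩ M` and `R`
    (∃ N₁ N₂ : Set K, IsQSubmodule P.Q N₁ ∧ IsQSubmodule P.Q N₂ ∧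
      N₁ ∩ N₂ = P.Q ∩ {x : K | 0 < P.v x} ∧
      N₁ + N₂ = (P.R : Set K) ∧
      N₁ ≠ P.Q ∩ {x : K | 0 < P.v x} ∧ N₁ ≠ (P.R : Set K) ∧
      N₂ ≠ P.Q ∩ {x : K | 0 < P.v x} ∧ N₂ ≠ (P.R : Set K)) := by
  refine ⟨fun A B₁ B₂ B₃ _ hB₁ hB₂ hB₃ hA₁ hne₁ hA₂ hne₂ hA₃ hne₃ =>
    inter_add_ne_of_forall_isQCombination (PreDiffeoValuedS.isQCombination_trichotomy hdense)
      hB₁ hB₂ hB₃ (hA₁.ssubset_of_ne hne₁).not_subset (hA₂.ssubset_of_ne hne₂).not_subset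
      (hA₃.ssubset_of_ne hne₃).not_subset, ?_⟩
  have hRM := hdense.R_inter_M_ne_Q_inter_M
  refine ⟨P.Q, (P.R : Set K) ∩ P.M, P.isQSubmodule_Q, P.isQSubmodule_R_inter_M, ?_,
    hdense.Q_add_R_inter_M, P.ne_inter_M_of_one_mem P.QSubring.one_mem,
    fun h => hRM (by rw [← h]), hRM, (P.ne_inter_M_of_one_mem (one_mem P.R)).symm⟩
  rw [← Set.inter_assoc, Set.inter_eq_left.2 P.Q_subset_R]
  rfl

/-- Assume the pre-diffeo-valued field structure is dense, and set
`I := Q ∩ M`.  Then the lattice of `Q`-submodules of `K` has cube rank exactly `2`: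
(i) for `Q`-submodules `A ⊊ B₁, B₂, B₃` of `K`, some `Bᵢ ∩ (Bⱼ + Bₗ) ≠ A`; and
(ii) there are `Q`-submodules `N₁, N₂` with `N₁ ∩ N₂ = I`, `N₁ + N₂ = R`,
`I ≠ N₁ ≠ R` and `I ≠ N₂ ≠ R`. -/
theorem cubeRank_Q_submodules_eq_two
    {p : ℕ} (hp : p.Prime) {K : Type*} [Field K] [CharP K p]
    {Γ : Type*} [AddCommGroup Γ] [LinearOrder Γ] [IsOrderedAddMonoid Γ]
    {k : Type*} [Field k] {D : Type*} [AddCommGroup D]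
    (P : PreDiffeoValuedS p K Γ k D)
    (hdense : P.toPreDiffeoValued.IsDense) :
    -- (i) no strict 3-cube
    (∀ A B₁ B₂ B₃ : Set K,
      IsQSubmodule P.Q A → IsQSubmodule P.Q B₁ → IsQSubmodule P.Q B₂ →
        IsQSubmodule P.Q B₃ →
      A ⊆ B₁ → A ≠ B₁ → A ⊆ B₂ → A ≠ B₂ → A ⊆ B₃ → A ≠ B₃ →
      (B₁ ∩ (B₂ + B₃) ≠ A ∨ B₂ ∩ (B₁ + B₃) ≠ A ∨ B₃ ∩ (B₁ + B₂) ≠ A)) ∧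
    -- (ii) a strict 2-cube between `I = Q ∩ M` and `R`
    (∃ N₁ N₂ : Set K, IsQSubmodule P.Q N₁ ∧ IsQSubmodule P.Q N₂ ∧
      N₁ ∩ N₂ = P.Q ∩ {x : K | 0 < P.v x} ∧
      N₁ + N₂ = (P.R : Set K) ∧
      N₁ ≠ P.Q ∩ {x : K | 0 < P.v x} ∧ N₁ ≠ (P.R : Set K) ∧
      N₂ ≠ P.Q ∩ {x : K | 0 < P.v x} ∧ N₂ ≠ (P.R : Set K)) :=
  cubeRank_Q_submodules_eq_two_general P hdense
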